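/- The starting city has an impact on the cost of an optimal solution: there exist a finite nonempty set P of points of ℤ² and two cities p0, p1 ∈ P such that sInf {k : ℕ | there exists a solution trajectory for (P, p0) with k configurations} ≠ sInf {k : ℕ | there exists a solution trajectory for (P, p1) with k configurations}. (A witness is P = {(0,0), (1,0), (2,0)}, for which the minima are 7 configurations from (0,0) and 8 configurations from (1,0).) -/
import Mathlib


/-- A trajectory of `k` configurations in the 9-successor racetrack model
on `ℤ²`. -/
def IsTrajectory (m k : ℕ) (c : Fin k → (Fin m → ℤ) × (Fin m → ℤ)) : Prop :=
  ∀ (t : ℕ) (h : t + 1 < k),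
    (c ⟨t + 1, h⟩).1 = (c ⟨t, by omega⟩).1 + (c ⟨t + 1, h⟩).2 ∧
    ∀ j : Fin m, |(c ⟨t + 1, h⟩).2 j - (c ⟨t, by omega⟩).2 j| ≤ 1

/-- A solution trajectory for `(P, p0)`: a trajectory of `k ≥ 1` configurations
starting and ending at `p0` with zero velocity, visiting every point of `P`. -/
def IsSolution (m : ℕ) (P : Finset (Fin m → ℤ)) (p0 : Fin m → ℤ)
    (k : ℕ) (c : Fin k → (Fin m → ℤ) × (Fin m → ℤ)) : Prop :=
  IsTrajectory m k c ∧ 1 ≤ k ∧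
  (∀ h : 0 < k,
    (c ⟨0, h⟩).1 = p0 ∧ (c ⟨0, h⟩).2 = 0 ∧
    (c ⟨k - 1, Nat.sub_lt h one_pos⟩).1 = p0 ∧
    (c ⟨k - 1, Nat.sub_lt h one_pos⟩).2 = 0) ∧
  (∀ q ∈ P, ∃ t : Fin k, (c t).1 = q)

/-- Padding: a solution of length `k ≤ n` gives one of length `n`. -/
lemma pad_solution (m : ℕ) (P : Finset (Fin m → ℤ)) (p0 : Fin m → ℤ)
    (k n : ℕ) (hkn : k ≤ n) (c : Fin k → (Fin m → ℤ) × (Fin m → ℤ))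
    (hs : IsSolution m P p0 k c) :
    ∃ c' : Fin n → (Fin m → ℤ) × (Fin m → ℤ), IsSolution m P p0 n c' := by
  obtain ⟨htraj, hk1, hbd, hvis⟩ := hs
  have hk : 0 < k := hk1
  refine ⟨fun t => c ⟨min t (k-1), by omega⟩, ?_, by omega, ?_, ?_⟩
  · intro t h
    by_cases ht : t + 1 ≤ k - 1
    · have e1 : min (t+1) (k-1) = t + 1 := by omega
      have e2 : min t (k-1) = t := by omega
      simp only [e1, e2]
      exact htraj t (by omega)
    · have e1 : min (t+1) (k-1) = k - 1 := by omega
      by_cases ht2 : t ≤ k - 1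
      · have ht2' : t = k - 1 := by omega
        have e2 : min t (k-1) = k - 1 := by omega
        simp only [e1, e2]
        have hv := (hbd hk).2.2.2
        refine ⟨?_, ?_⟩
        · rw [hv]; simp
        · intro j; rw [hv]; simp
      · have e2 : min t (k-1) = k - 1 := by omega
        simp only [e1, e2]
        have hv := (hbd hk).2.2.2
        refine ⟨by rw [hv]; simp, by intro j; rw [hv]; simp⟩
  · intro h
    have e0 : min 0 (k-1) = 0 := by omega
    have en : min (n-1) (k-1) = k - 1 := by omega
    simp only [e0, en]
    obtain ⟨h1, h2, h3, h4⟩ := hbd hk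
    exact ⟨h1, h2, h3, h4⟩
  · intro q hq
    obtain ⟨t, ht⟩ := hvis q hq
    refine ⟨⟨t, by omega⟩, ?_⟩
    have : min (t : ℕ) (k-1) = t := by omega
    simp only [this]
    simpa using ht

/-- The starting city has an impact on the cost of an optimal solution: there
is an instance with two starting cities giving different optimal costs. -/
theorem vtsp_starting_city_matters :
    ∃ (P : Finset (Fin 2 → ℤ)) (p0 p1 : Fin 2 → ℤ),
      P.Nonempty ∧ p0 ∈ P ∧ p1 ∈ P ∧
      sInf {k : ℕ | ∃ c : Fin k → (Fin 2 → ℤ) × (Fin 2 → ℤ),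
          IsSolution 2 P p0 k c} ≠
      sInf {k : ℕ | ∃ c : Fin k → (Fin 2 → ℤ) × (Fin 2 → ℤ),
          IsSolution 2 P p1 k c} := by
  classical
  refine ⟨{![0,0], ![1,0], ![2,0]}, ![0,0], ![1,0], ?_, ?_, ?_, ?_⟩
  · exact ⟨![0,0], by simp⟩
  · simp
  · simp
  · -- upper bound 7 from ![0,0]
    have h7 : (7 : ℕ) ∈ {k : ℕ | ∃ c : Fin k → (Fin 2 → ℤ) × (Fin 2 → ℤ),
        IsSolution 2 {![0,0], ![1,0], ![2,0]} ![0,0] k c} := by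
      refine ⟨![(![0,0],![0,0]), (![1,0],![1,0]), (![2,0],![1,0]), (![2,0],![0,0]),
        (![1,0],![-1,0]), (![0,0],![-1,0]), (![0,0],![0,0])], ?_, by norm_num, ?_, ?_⟩
      · intro t h
        have h2 : t < 6 := by omega
        interval_cases t <;> (revert h; decide)
      · decide
      · intro q hq
        simp only [Finset.mem_insert, Finset.mem_singleton] at hq
        rcases hq with rfl | rfl | rfl
        · exact ⟨0, by decide⟩
        · exact ⟨1, by decide⟩
        · exact ⟨2, by decide⟩
    have h8 : (8 : ℕ) ∈ {k : ℕ | ∃ c : Fin k → (Fin 2 → ℤ) × (Fin 2 → ℤ),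
        IsSolution 2 {![0,0], ![1,0], ![2,0]} ![1,0] k c} := by
      refine ⟨![(![1,0],![0,0]), (![2,0],![1,0]), (![2,0],![0,0]), (![1,0],![-1,0]),
        (![0,0],![-1,0]), (![0,0],![0,0]), (![1,0],![1,0]), (![1,0],![0,0])],
        ?_, by norm_num, ?_, ?_⟩
      · intro t h
        have h2 : t < 7 := by omega
        interval_cases t <;> (revert h; decide)
      · decide
      · intro q hq
        simp only [Finset.mem_insert, Finset.mem_singleton] at hq
        rcases hq with rfl | rfl | rfl
        · exact ⟨4, by decide⟩
        · exact ⟨0, by decide⟩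
        · exact ⟨1, by decide⟩
    -- no solution of length 7 from ![1,0]
    have no7 : ∀ c : Fin 7 → (Fin 2 → ℤ) × (Fin 2 → ℤ),
        ¬ IsSolution 2 {![0,0], ![1,0], ![2,0]} ![1,0] 7 c := by
      intro c hc
      obtain ⟨htraj, _, hbd, hvis⟩ := hc
      obtain ⟨hA0, hW0, hA6, hW6⟩ := hbd (by norm_num)
      have eA0 := congrFun hA0 0
      have eW0 := congrFun hW0 0
      have eA6 := congrFun hA6 0
      have eW6 := congrFun hW6 0
      norm_num at eA0 eW0 eA6 eW6
      have step : ∀ (t : ℕ) (h : t + 1 < 7),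
          (c ⟨t+1, h⟩).1 0 = (c ⟨t, by omega⟩).1 0 + (c ⟨t+1, h⟩).2 0 ∧
          -1 ≤ (c ⟨t+1, h⟩).2 0 - (c ⟨t, by omega⟩).2 0 ∧
          (c ⟨t+1, h⟩).2 0 - (c ⟨t, by omega⟩).2 0 ≤ 1 := by
        intro t h
        obtain ⟨hp, hv⟩ := htraj t h
        have := abs_le.mp (hv 0)
        exact ⟨by rw [hp]; rfl, this.1, this.2⟩
      have s0 := step 0 (by norm_num)
      have s1 := step 1 (by norm_num)
      have s2 := step 2 (by norm_num)
      have s3 := step 3 (by norm_num)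
      have s4 := step 4 (by norm_num)
      have s5 := step 5 (by norm_num)
      norm_num at s0 s1 s2 s3 s4 s5
      obtain ⟨t, ht⟩ := hvis ![0,0] (by simp)
      obtain ⟨t', ht'⟩ := hvis ![2,0] (by simp)
      have et := congrFun ht 0
      have et' := congrFun ht' 0
      norm_num at et et'
      obtain ⟨tv, htv⟩ := t
      obtain ⟨tv', htv'⟩ := t'
      interval_cases tv <;> interval_cases tv' <;>
        (try simp only [Fin.mk_zero, Fin.mk_one] at et et') <;> omega
    have lower : ∀ x ∈ {k : ℕ | ∃ c : Fin k → (Fin 2 → ℤ) × (Fin 2 → ℤ),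
        IsSolution 2 {![0,0], ![1,0], ![2,0]} ![1,0] k c}, 8 ≤ x := by
      intro x hx
      obtain ⟨c, hc⟩ := hx
      by_contra hlt
      push_neg at hlt
      have hx7 : x ≤ 7 := by omega
      obtain ⟨c', hc'⟩ := pad_solution 2 _ _ x 7 hx7 c hc
      exact no7 c' hc'
    have hle : sInf {k : ℕ | ∃ c : Fin k → (Fin 2 → ℤ) × (Fin 2 → ℤ),
        IsSolution 2 {![0,0], ![1,0], ![2,0]} ![0,0] k c} ≤ 7 := Nat.sInf_le h7
    have hge : 8 ≤ sInf {k : ℕ | ∃ c : Fin k → (Fin 2 → ℤ) × (Fin 2 → ℤ),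
        IsSolution 2 {![0,0], ![1,0], ![2,0]} ![1,0] k c} :=
      lower _ (Nat.sInf_mem ⟨8, h8⟩)
    omega
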